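/- arXiv:2403.09003 — 2 statements merged into one kernel-verified Lean document; each statement's English description precedes it below -/
import Mathlib

section
/- Let F(z) = Σ_{k=0}^∞ F_k z^k be holomorphic on the disc |z| < R with R > 0, and let 0 < δ < R. Then the function I(s) := ∫_{1-δ}^1 F(1-t)(1-t)^s dt, initially defined for real s > -1, extends to a meromorphic function on all of ℂ whose only possible singularities are simple poles at s = -j-1 for j = 0, 1, 2, …, with residue F_j at s = -j-1. -/
/-!
Substituting `u = 1 - t` and integrating the power series of `F` term by term gives, for real
`s > -1`,
`I(s) = ∑ₖ F_k δ^(s+k+1) / (s+k+1) = δ^s · ∑ₖ a_k / (s+k+1)` with `a_k = F_k δ^(k+1)`.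
Since `∑ |a_k| < ∞`, the series on the right converges locally uniformly away from the points
`-k-1`, and near `-j-1` all its terms except the `j`-th stay bounded; so `δ^s` times it is the
required continuation, with residue `δ^(-j-1) a_j = F_j` at `-j-1`.
-/

open Filter Topology Set

noncomputable def poleSeries (a : ℕ → ℂ) (s : ℂ) : ℂ := ∑' k : ℕ, a k / (s + k + 1)

theorem exists_pos_le_norm_add_natCast_add_one {s : ℂ} (hs : ∀ k : ℕ, s ≠ -(k : ℂ) - 1) :
    ∃ ε > 0, ∀ k : ℕ, ε ≤ ‖s + k + 1‖ := by
  have hlim : Tendsto (fun k : ℕ => ‖s + k + 1‖) cofinite atTop := by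
    rw [Nat.cofinite_eq_atTop]
    refine tendsto_atTop_mono (fun k => ?_)
      (tendsto_atTop_add_const_right _ (-‖s + 1‖) tendsto_natCast_atTop_atTop)
    have h := norm_sub_norm_le (k : ℂ) (-(s + 1))
    rw [Complex.norm_natCast, norm_neg, show (k : ℂ) - -(s + 1) = s + k + 1 by ring] at h
    linarith
  obtain ⟨k₀, hk₀⟩ := hlim.exists_forall_le
  refine ⟨‖s + k₀ + 1‖, norm_pos_iff.mpr fun h => hs k₀ ?_, hk₀⟩
  linear_combination h

section PoleSeries

variable {a : ℕ → ℂ}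

theorem analyticOnNhd_poleSeries (ha : Summable fun k => ‖a k‖) :
    AnalyticOnNhd ℂ (poleSeries a) {s : ℂ | ∀ k : ℕ, s ≠ -(k : ℂ) - 1} := by
  intro s hs
  obtain ⟨ε, hε, hεs⟩ := exists_pos_le_norm_add_natCast_add_one hs
  have hball : ∀ w ∈ Metric.ball s (ε / 2), ∀ k : ℕ, ε / 2 ≤ ‖w + k + 1‖ := by
    intro w hw k
    have h := norm_sub_norm_le (s + k + 1) (s - w)
    rw [show s + k + 1 - (s - w) = w + k + 1 by ring, norm_sub_rev, ← dist_eq_norm] at h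
    linarith [hεs k, Metric.mem_ball.mp hw]
  refine DifferentiableOn.analyticAt ?_ (Metric.ball_mem_nhds s (half_pos hε))
  refine Complex.differentiableOn_tsum_of_summable_norm (ha.mul_right (2 / ε))
    (fun k => ?_) Metric.isOpen_ball (fun k w hw => ?_)
  · exact (differentiableOn_const _).div (by fun_prop) fun w hw =>
      norm_pos_iff.mp ((half_pos hε).trans_le (hball w hw k))
  · rw [norm_div, div_le_iff₀ ((half_pos hε).trans_le (hball w hw k))]
    calc ‖a k‖ = ‖a k‖ * (2 / ε) * (ε / 2) := by field_simp
      _ ≤ ‖a k‖ * (2 / ε) * ‖w + k + 1‖ := by gcongr; exact hball w hw k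

theorem one_half_le_norm_add_natCast_add_one {s : ℂ} {j k : ℕ} (hs : ‖s + j + 1‖ < 1 / 2)
    (hkj : k ≠ j) : 1 / 2 ≤ ‖s + k + 1‖ := by
  have hkj' : (1 : ℝ) ≤ |(k : ℝ) - j| := by
    have h : (1 : ℤ) ≤ |(k : ℤ) - j| := Int.one_le_abs (sub_ne_zero.mpr (by exact_mod_cast hkj))
    exact_mod_cast h
  have h := norm_sub_norm_le ((k : ℂ) - j) (-(s + j + 1))
  rw [show (k : ℂ) - j - -(s + j + 1) = s + k + 1 by ring, norm_neg,
    show (k : ℂ) - j = ((k - j : ℝ) : ℂ) by push_cast; ring, Complex.norm_real,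
    Real.norm_eq_abs] at h
  linarith

theorem norm_mul_poleSeries_sub_le (ha : Summable fun k => ‖a k‖) {j : ℕ} {s : ℂ}
    (hs : ‖s + j + 1‖ < 1 / 2) (hs₀ : s + j + 1 ≠ 0) :
    ‖(s + j + 1) * poleSeries a s - a j‖ ≤ 2 * ‖s + j + 1‖ * ∑' k, ‖a k‖ := by
  set b : ℕ → ℂ := fun k => (s + j + 1) * (a k / (s + k + 1))
  have hbj : b j = a j := by simp only [b]; field_simp
  have hb : ∀ k ≠ j, ‖b k‖ ≤ 2 * ‖s + j + 1‖ * ‖a k‖ := by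
    intro k hkj
    have hk := one_half_le_norm_add_natCast_add_one hs hkj
    simp only [b, norm_mul, norm_div]
    rw [mul_div_assoc', div_le_iff₀ (by linarith)]
    nlinarith [mul_le_mul_of_nonneg_left hk
      (mul_nonneg (norm_nonneg (a k)) (norm_nonneg (s + j + 1)))]
  have hbsum : Summable b := by
    refine Summable.of_norm_bounded ha fun k => ?_
    rcases eq_or_ne k j with rfl | hkj
    · rw [hbj]
    · exact (hb k hkj).trans (mul_le_of_le_one_left (norm_nonneg _) (by linarith))
  have hsplit : (s + j + 1) * poleSeries a s - a j = ∑' k, if k = j then 0 else b k := by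
    rw [poleSeries, ← tsum_mul_left, hbsum.tsum_eq_add_tsum_ite j, hbj, add_sub_cancel_left]
  rw [hsplit]
  refine tsum_of_norm_bounded (ha.hasSum.mul_left _) fun k => ?_
  split_ifs with hkj
  · rw [norm_zero]; positivity
  · exact hb k hkj

theorem tendsto_mul_poleSeries (ha : Summable fun k => ‖a k‖) (j : ℕ) :
    Tendsto (fun s : ℂ => (s + j + 1) * poleSeries a s) (𝓝[≠] (-(j : ℂ) - 1)) (𝓝 (a j)) := by
  have hdist : Tendsto (fun s : ℂ => ‖s + j + 1‖) (𝓝 (-(j : ℂ) - 1)) (𝓝 0) := by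
    have h : Continuous fun s : ℂ => ‖s + j + 1‖ := by fun_prop
    simpa [show -(j : ℂ) - 1 + j + 1 = 0 by ring] using h.tendsto (-(j : ℂ) - 1)
  have hbound : Tendsto (fun s : ℂ => 2 * ‖s + j + 1‖ * ∑' k, ‖a k‖) (𝓝[≠] (-(j : ℂ) - 1))
      (𝓝 0) := by
    simpa using ((hdist.const_mul 2).mul_const (∑' k, ‖a k‖)).mono_left nhdsWithin_le_nhds
  rw [tendsto_iff_norm_sub_tendsto_zero]
  refine squeeze_zero' (.of_forall fun _ => norm_nonneg _) ?_ hbound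
  filter_upwards [nhdsWithin_le_nhds (hdist.eventually (gt_mem_nhds one_half_pos)),
    self_mem_nhdsWithin] with s hs hs₀
  exact norm_mul_poleSeries_sub_le ha hs fun h =>
    hs₀ (mem_singleton_iff.mpr (by linear_combination h))

end PoleSeries

theorem summable_norm_mul_pow_of_lt {R δ : ℝ} {c : ℕ → ℂ} (hδ : 0 ≤ δ) (hδR : δ < R)
    (hc : ∀ z : ℂ, ‖z‖ < R → Summable fun k => c k * z ^ k) :
    Summable fun k => ‖c k‖ * δ ^ k := by
  obtain ⟨r, hδr, hrR⟩ := exists_between hδR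
  have hr : ‖(r : ℂ)‖ = r := by simp [abs_of_pos (hδ.trans_lt hδr)]
  have h := summable_powerSeries_of_norm_lt (z := (δ : ℂ))
    (hc r (hr.symm ▸ hrR)).hasSum.tendsto_sum_nat.cauchySeq
    (by rwa [hr, Complex.norm_real, Real.norm_of_nonneg hδ])
  simpa [norm_mul, norm_pow, abs_of_nonneg hδ] using summable_norm_iff.mpr h

theorem intervalIntegral_mul_pow_mul_rpow (c : ℂ) (k : ℕ) {δ s : ℝ} (hδ : 0 ≤ δ) (hs : -1 < s) :
    ∫ u in 0..δ, c * (u : ℂ) ^ k * ((u ^ s : ℝ) : ℂ) =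
      c * ((δ ^ (s + k + 1) / (s + k + 1) : ℝ) : ℂ) := by
  have hsk : -1 < s + k := by linarith [k.cast_nonneg (α := ℝ)]
  calc ∫ u in 0..δ, c * (u : ℂ) ^ k * ((u ^ s : ℝ) : ℂ)
      = ∫ u in 0..δ, c * ((u ^ (s + k) : ℝ) : ℂ) := by
        refine intervalIntegral.integral_congr_ae (.of_forall fun u hu => ?_)
        rw [uIoc_of_le hδ] at hu
        rw [Real.rpow_add hu.1, Real.rpow_natCast]
        push_cast
        ring
    _ = c * ((δ ^ (s + k + 1) / (s + k + 1) : ℝ) : ℂ) := by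
        rw [intervalIntegral.integral_const_mul, intervalIntegral.integral_ofReal,
          integral_rpow (Or.inl hsk), Real.zero_rpow (by linarith), sub_zero]

theorem hasSum_intervalIntegral_mul_rpow {c : ℕ → ℂ} {f : ℝ → ℂ} {δ s : ℝ} (hδ : 0 ≤ δ)
    (hs : -1 < s) (hc : Summable fun k => ‖c k‖ * δ ^ k)
    (hf : ∀ u ∈ Ioc 0 δ, HasSum (fun k => c k * (u : ℂ) ^ k) (f u)) :
    HasSum (fun k => c k * ((δ ^ (s + k + 1) / (s + k + 1) : ℝ) : ℂ))
      (∫ u in 0..δ, f u * ((u ^ s : ℝ) : ℂ)) := by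
  simp_rw [← intervalIntegral_mul_pow_mul_rpow _ _ hδ hs]
  refine intervalIntegral.hasSum_integral_of_dominated_convergence
    (fun k u => ‖c k‖ * δ ^ k * u ^ s) (fun k => by fun_prop) (fun k => ?_)
    (.of_forall fun u _ => hc.mul_right _) ?_ (.of_forall fun u hu => ?_)
  · refine .of_forall fun u hu => ?_
    rw [uIoc_of_le hδ] at hu
    rw [norm_mul, norm_mul, norm_pow, Complex.norm_real, Complex.norm_real, Real.norm_eq_abs,
      Real.norm_eq_abs, abs_of_pos hu.1, abs_of_nonneg (Real.rpow_nonneg hu.1.le s)]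
    gcongr
    exacts [Real.rpow_nonneg hu.1.le s, hu.1.le, hu.2]
  · simp_rw [tsum_mul_right]
    exact (intervalIntegral.intervalIntegrable_rpow' hs).const_mul _
  · rw [uIoc_of_le hδ] at hu
    exact (hf u hu).mul_right _

theorem intervalIntegral_comp_one_sub_mul_rpow (F : ℂ → ℂ) (δ s : ℝ) :
    ∫ t in (1 - δ)..1, F ((1 : ℂ) - t) * (((1 - t) ^ s : ℝ) : ℂ) =
      ∫ u in 0..δ, F u * ((u ^ s : ℝ) : ℂ) := by
  simpa using intervalIntegral.integral_comp_sub_left (fun u : ℝ => F u * ((u ^ s : ℝ) : ℂ))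
    (a := 1 - δ) (b := 1) 1

theorem integral_meromorphic_continuation_simple_poles_general
    (R δ : ℝ) (hδ : 0 < δ) (hδR : δ < R)
    (F : ℂ → ℂ) (Fc : ℕ → ℂ)
    (hF : ∀ z : ℂ, ‖z‖ < R → HasSum (fun k => Fc k * z ^ k) (F z)) :
    ∃ I : ℂ → ℂ,
      (∀ s : ℝ, -1 < s →
        I (s : ℂ) = ∫ t in (1 - δ)..1, F ((1 : ℂ) - t) * (((1 - t) ^ s : ℝ) : ℂ)) ∧
      AnalyticOnNhd ℂ I {s : ℂ | ∀ j : ℕ, s ≠ -(j : ℂ) - 1} ∧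
      (∀ j : ℕ, Tendsto (fun s : ℂ => (s + j + 1) * I s)
        (𝓝[≠] (-(j : ℂ) - 1)) (𝓝 (Fc j))) := by
  set a : ℕ → ℂ := fun k => Fc k * δ ^ (k + 1)
  have hδ' : (δ : ℂ) ≠ 0 := Complex.ofReal_ne_zero.mpr hδ.ne'
  have hc := summable_norm_mul_pow_of_lt hδ.le hδR fun z hz => (hF z hz).summable
  have ha : Summable fun k => ‖a k‖ := by
    simpa [a, norm_mul, norm_pow, abs_of_pos hδ, pow_succ, mul_assoc] using hc.mul_right δ
  have hpow : Differentiable ℂ fun s : ℂ => (δ : ℂ) ^ s :=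
    fun s => differentiableAt_id.const_cpow (Or.inl hδ')
  refine ⟨fun s => (δ : ℂ) ^ s * poleSeries a s, fun s hs => ?_,
    fun s hs => (hpow.analyticAt s).mul (analyticOnNhd_poleSeries ha s hs), fun j => ?_⟩
  · have hsum := hasSum_intervalIntegral_mul_rpow hδ.le hs hc fun u hu =>
      hF u (by simpa [abs_of_pos hu.1] using hu.2.trans_lt hδR)
    dsimp only
    rw [intervalIntegral_comp_one_sub_mul_rpow, ← hsum.tsum_eq, poleSeries, ← tsum_mul_left]
    refine tsum_congr fun k => ?_
    have hsk : (s : ℂ) + k + 1 = s + ((k + 1 : ℕ) : ℂ) := by push_cast; ring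
    push_cast [Complex.ofReal_cpow hδ.le]
    rw [hsk, Complex.cpow_add _ _ hδ', Complex.cpow_natCast]
    ring
  · have hres : (δ : ℂ) ^ (-(j : ℂ) - 1) * a j = Fc j := by
      rw [show -(j : ℂ) - 1 = -((j + 1 : ℕ) : ℂ) by push_cast; ring, Complex.cpow_neg,
        Complex.cpow_natCast]
      simp only [a]
      field_simp
    rw [← hres]
    refine (((hpow.continuous.tendsto _).mono_left nhdsWithin_le_nhds).mul
      (tendsto_mul_poleSeries ha j)).congr fun s => ?_
    ring

/-- Lemma (a): if `F(z) = Σ Fc k · z^k` is holomorphic on `|z| < R` and `0 < δ < R`, then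
`I(s) = ∫_{1-δ}^1 F(1-t)(1-t)^s dt` (defined for real `s > -1`) extends to a function
holomorphic on `ℂ` away from `{-j-1 : j ∈ ℕ}`, with (at most) simple poles at `s = -j-1`
having residue `Fc j`. -/
theorem integral_meromorphic_continuation_simple_poles
    (R δ : ℝ) (hR : 0 < R) (hδ : 0 < δ) (hδR : δ < R)
    (F : ℂ → ℂ) (Fc : ℕ → ℂ)
    (hF : ∀ z : ℂ, ‖z‖ < R → HasSum (fun k => Fc k * z ^ k) (F z)) :
    ∃ I : ℂ → ℂ,
      (∀ s : ℝ, -1 < s →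
        I (s : ℂ) = ∫ t in (1 - δ)..1, F ((1 : ℂ) - t) * (((1 - t) ^ s : ℝ) : ℂ)) ∧
      AnalyticOnNhd ℂ I {s : ℂ | ∀ j : ℕ, s ≠ -(j : ℂ) - 1} ∧
      (∀ j : ℕ, Tendsto (fun s : ℂ => (s + j + 1) * I s)
        (𝓝[≠] (-(j : ℂ) - 1)) (𝓝 (Fc j))) :=
  integral_meromorphic_continuation_simple_poles_general R δ hδ hδR F Fc hF
end

section
/- Let n ≥ 2, m ≥ 1 with 2m = s + 1 + n/2 where s > -1. Then for all integers p ≥ 1, [2p(p+n-2)]^m · (n/2)_p/((n/2)+s+1)_p ≍ p·(n/2)_p/p!, with implicit constants depending only on n and m. -/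
/-- Two-sided factorial bound: for `p ≥ 1`, `p! p^k ≤ (p+k)! ≤ p! (k+1)! p^k`. -/
lemma fact_pow_bounds (p : ℕ) (hp : 1 ≤ p) : ∀ k : ℕ,
    p.factorial * p ^ k ≤ (p + k).factorial ∧
    (p + k).factorial ≤ p.factorial * (k + 1).factorial * p ^ k
  | 0 => by simp
  | k + 1 => by
    obtain ⟨h1, h2⟩ := fact_pow_bounds p hp k
    have hfs : (p + (k + 1)).factorial = (p + k + 1) * (p + k).factorial := by
      rw [← Nat.add_assoc, Nat.factorial_succ]
    constructor
    · calc p.factorial * p ^ (k + 1) = p * (p.factorial * p ^ k) := by ring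
        _ ≤ p * (p + k).factorial := Nat.mul_le_mul_left _ h1
        _ ≤ (p + k + 1) * (p + k).factorial := Nat.mul_le_mul_right _ (by omega)
        _ = (p + (k + 1)).factorial := hfs.symm
    · calc (p + (k + 1)).factorial = (p + k + 1) * (p + k).factorial := hfs
        _ ≤ ((k + 2) * p) * (p + k).factorial :=
            Nat.mul_le_mul_right _ (by nlinarith)
        _ ≤ ((k + 2) * p) * (p.factorial * (k + 1).factorial * p ^ k) :=
            Nat.mul_le_mul_left _ h2
        _ = p.factorial * (k + 1 + 1).factorial * p ^ (k + 1) := by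
            rw [Nat.factorial_succ (k + 1)]; ring

set_option maxHeartbeats 1000000 in
/-- For `n ≥ 2`, `m ≥ 1` and `s > -1` with `2m = s + 1 + n/2`, one has
`[2p(p+n-2)]^m · (n/2)_p/((n/2)+s+1)_p ≍ p·(n/2)_p/p!` uniformly for integers `p ≥ 1`,
with implicit constants depending only on `n` and `m`. -/
theorem harmonic_dirichlet_coefficient_asymp (n m : ℕ) (s : ℝ) (hn : 2 ≤ n) (hm : 1 ≤ m)
    (hs : -1 < s) (hms : 2 * (m : ℝ) = s + 1 + (n : ℝ) / 2) :
    ∃ c C : ℝ, 0 < c ∧ c ≤ C ∧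
      ∀ p : ℕ, 1 ≤ p →
        c * ((p : ℝ) * (ascPochhammer ℝ p).eval ((n : ℝ) / 2) / (p.factorial : ℝ)) ≤
            (2 * (p : ℝ) * ((p : ℝ) + n - 2)) ^ m *
              ((ascPochhammer ℝ p).eval ((n : ℝ) / 2) /
                (ascPochhammer ℝ p).eval ((n : ℝ) / 2 + s + 1)) ∧
          (2 * (p : ℝ) * ((p : ℝ) + n - 2)) ^ m *
              ((ascPochhammer ℝ p).eval ((n : ℝ) / 2) /
                (ascPochhammer ℝ p).eval ((n : ℝ) / 2 + s + 1)) ≤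
            C * ((p : ℝ) * (ascPochhammer ℝ p).eval ((n : ℝ) / 2) / (p.factorial : ℝ)) := by
  have hm1 : (1 : ℝ) ≤ (m : ℝ) := by exact_mod_cast hm
  have hn2 : (2 : ℝ) ≤ (n : ℝ) := by exact_mod_cast hn
  have h2m0 : (0 : ℝ) < 2 * (m : ℝ) := by linarith
  have hGpos : (0 : ℝ) < ((2 * m - 1).factorial : ℝ) := by
    exact_mod_cast Nat.factorial_pos (2 * m - 1)
  have hG1 : (1 : ℝ) ≤ ((2 * m - 1).factorial : ℝ) := by
    exact_mod_cast Nat.one_le_iff_ne_zero.mpr (Nat.factorial_ne_zero (2 * m - 1))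
  refine ⟨2 ^ m / (2 * (m : ℝ)), (2 * ((n : ℝ) - 1)) ^ m * ((2 * m - 1).factorial : ℝ),
    div_pos (pow_pos two_pos m) h2m0, ?_, ?_⟩
  · -- c ≤ C
    have h1 : (2 : ℝ) ^ m / (2 * (m : ℝ)) ≤ 2 ^ m := by
      rw [div_le_iff₀ h2m0]
      nlinarith [pow_pos (show (0:ℝ) < 2 by norm_num) m]
    have h2 : (2 : ℝ) ^ m ≤ (2 * ((n : ℝ) - 1)) ^ m := by
      apply pow_le_pow_left₀ (by norm_num)
      linarith
    have h4 : (0 : ℝ) < (2 * ((n : ℝ) - 1)) ^ m := pow_pos (by linarith) m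
    nlinarith
  · intro p hp
    have hP1 : (1 : ℝ) ≤ (p : ℝ) := by exact_mod_cast hp
    have hP0 : (0 : ℝ) < (p : ℝ) := by linarith
    have hA : 0 < (ascPochhammer ℝ p).eval ((n : ℝ) / 2) :=
      ascPochhammer_pos p _ (by linarith)
    have hpf : (0 : ℝ) < (p.factorial : ℝ) := by exact_mod_cast p.factorial_pos
    -- the denominator Pochhammer is at the natural number 2m
    have hcast : (n : ℝ) / 2 + s + 1 = ((2 * m : ℕ) : ℝ) := by push_cast; linarith
    have hBeq : (ascPochhammer ℝ p).eval ((n : ℝ) / 2 + s + 1)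
        = ((2 * m).ascFactorial p : ℝ) := by
      rw [hcast, ← Nat.cast_ascFactorial]
    -- factorial identity for the ascFactorial
    have hk : 2 * m - 1 + 1 = 2 * m := by omega
    have hdefN : (2 * m - 1).factorial * (2 * m).ascFactorial p
        = (p + (2 * m - 1)).factorial := by
      have h := Nat.factorial_mul_ascFactorial (2 * m - 1) p
      rw [hk] at h
      rw [h, Nat.add_comm]
    have hGB : ((2 * m - 1).factorial : ℝ) * ((2 * m).ascFactorial p : ℝ)
        = ((p + (2 * m - 1)).factorial : ℝ) := by exact_mod_cast hdefN
    have hBpos : (0 : ℝ) < ((2 * m).ascFactorial p : ℝ) := by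
      have : 0 < (2 * m).ascFactorial p := by
        have := Nat.factorial_pos (p + (2 * m - 1))
        have h0 := Nat.factorial_pos (2 * m - 1)
        by_contra hc
        push_neg at hc
        interval_cases h : (2 * m).ascFactorial p
        omega
      exact_mod_cast this
    -- bounds on (p + (2m-1))!
    obtain ⟨hFl, hFu⟩ := fact_pow_bounds p hp (2 * m - 1)
    rw [hk] at hFu
    have hFlow : (p.factorial : ℝ) * (p : ℝ) ^ (2 * m - 1)
        ≤ ((p + (2 * m - 1)).factorial : ℝ) := by exact_mod_cast hFl
    have hFup : ((p + (2 * m - 1)).factorial : ℝ)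
        ≤ (p.factorial : ℝ) * ((2 * m).factorial : ℝ) * (p : ℝ) ^ (2 * m - 1) := by
      exact_mod_cast hFu
    have h2mf : ((2 * m).factorial : ℝ) = (2 * (m : ℝ)) * ((2 * m - 1).factorial : ℝ) := by
      have h := Nat.factorial_succ (2 * m - 1)
      rw [hk] at h
      push_cast [h, hk]
      ring
    -- bounds on E := 2p(p+n-2)
    have hE1 : 2 * (p : ℝ) ^ 2 ≤ 2 * (p : ℝ) * ((p : ℝ) + n - 2) := by nlinarith
    have hE2 : 2 * (p : ℝ) * ((p : ℝ) + n - 2) ≤ 2 * ((n : ℝ) - 1) * (p : ℝ) ^ 2 := by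
      nlinarith
    have hE0 : (0 : ℝ) ≤ 2 * (p : ℝ) ^ 2 := by positivity
    have hE00 : (0 : ℝ) ≤ 2 * (p : ℝ) * ((p : ℝ) + n - 2) := le_trans hE0 hE1
    have hEm1 : 2 ^ m * (p : ℝ) ^ (2 * m) ≤ (2 * (p : ℝ) * ((p : ℝ) + n - 2)) ^ m := by
      calc 2 ^ m * (p : ℝ) ^ (2 * m) = (2 * (p : ℝ) ^ 2) ^ m := by
            rw [mul_pow, ← pow_mul]
        _ ≤ _ := pow_le_pow_left₀ hE0 hE1 m
    have hEm2 : (2 * (p : ℝ) * ((p : ℝ) + n - 2)) ^ m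
        ≤ (2 * ((n : ℝ) - 1)) ^ m * (p : ℝ) ^ (2 * m) := by
      calc (2 * (p : ℝ) * ((p : ℝ) + n - 2)) ^ m
          ≤ (2 * ((n : ℝ) - 1) * (p : ℝ) ^ 2) ^ m :=
            pow_le_pow_left₀ hE00 hE2 m
        _ = (2 * ((n : ℝ) - 1)) ^ m * (p : ℝ) ^ (2 * m) := by rw [mul_pow, ← pow_mul]
    have hPP : (p : ℝ) ^ (2 * m - 1) * (p : ℝ) = (p : ℝ) ^ (2 * m) := by
      rw [← pow_succ, hk]
    have hEmpos : (0 : ℝ) < (2 * (p : ℝ) * ((p : ℝ) + n - 2)) ^ m := by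
      calc (0:ℝ) < 2 ^ m * (p : ℝ) ^ (2 * m) := by positivity
        _ ≤ _ := hEm1
    set E : ℝ := 2 * (p : ℝ) * ((p : ℝ) + n - 2) with hEdef
    set Fp : ℝ := ((p + (2 * m - 1)).factorial : ℝ) with hFpdef
    set G : ℝ := ((2 * m - 1).factorial : ℝ) with hGdef
    set Bv : ℝ := ((2 * m).ascFactorial p : ℝ) with hBvdef
    set A : ℝ := (ascPochhammer ℝ p).eval ((n : ℝ) / 2) with hAdef
    set pf : ℝ := (p.factorial : ℝ) with hpfdef
    rw [hBeq]
    constructor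
    · -- lower bound
      have key : 2 ^ m * (p : ℝ) * Fp ≤ E ^ m * pf * G * (2 * (m : ℝ)) := by
        calc 2 ^ m * (p : ℝ) * Fp
            ≤ 2 ^ m * (p : ℝ) * (pf * ((2 * m).factorial : ℝ) * (p : ℝ) ^ (2 * m - 1)) := by
              apply mul_le_mul_of_nonneg_left hFup (by positivity)
          _ = (2 ^ m * (p : ℝ) ^ (2 * m)) * pf * ((2 * m).factorial : ℝ) := by
              rw [← hPP]; ring
          _ ≤ E ^ m * pf * ((2 * m).factorial : ℝ) := by
              apply mul_le_mul_of_nonneg_right _ (by positivity)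
              exact mul_le_mul_of_nonneg_right hEm1 hpf.le
          _ = E ^ m * pf * G * (2 * (m : ℝ)) := by rw [h2mf]; ring
      have step : 2 ^ m / (2 * (m : ℝ)) * (p : ℝ) * Bv ≤ E ^ m * pf := by
        rw [div_mul_eq_mul_div, div_mul_eq_mul_div, div_le_iff₀ h2m0]
        have hmul : (2 ^ m * (p : ℝ) * Bv) * G ≤ (E ^ m * pf * (2 * (m : ℝ))) * G := by
          calc (2 ^ m * (p : ℝ) * Bv) * G = 2 ^ m * (p : ℝ) * (G * Bv) := by ring
            _ = 2 ^ m * (p : ℝ) * Fp := by rw [hGB]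
            _ ≤ E ^ m * pf * G * (2 * (m : ℝ)) := key
            _ = (E ^ m * pf * (2 * (m : ℝ))) * G := by ring
        exact le_of_mul_le_mul_right hmul hGpos
      rw [show 2 ^ m / (2 * (m : ℝ)) * ((p : ℝ) * A / pf) = (2 ^ m / (2 * (m : ℝ)) * (p : ℝ) * A) / pf from by ring,
        show E ^ m * (A / Bv) = (E ^ m * A) / Bv from by ring,
        div_le_div_iff₀ hpf hBpos]
      calc 2 ^ m / (2 * (m : ℝ)) * (p : ℝ) * A * Bv
          = A * (2 ^ m / (2 * (m : ℝ)) * (p : ℝ) * Bv) := by ring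
        _ ≤ A * (E ^ m * pf) := mul_le_mul_of_nonneg_left step hA.le
        _ = E ^ m * A * pf := by ring
    · -- upper bound
      have key : E ^ m * pf * G ≤ ((2 * ((n : ℝ) - 1)) ^ m * G) * (p : ℝ) * Fp := by
        calc E ^ m * pf * G
            ≤ ((2 * ((n : ℝ) - 1)) ^ m * (p : ℝ) ^ (2 * m)) * pf * G := by
              apply mul_le_mul_of_nonneg_right _ hGpos.le
              exact mul_le_mul_of_nonneg_right hEm2 hpf.le
          _ = (2 * ((n : ℝ) - 1)) ^ m * G * (p : ℝ) * (pf * (p : ℝ) ^ (2 * m - 1)) := by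
              rw [← hPP]; ring
          _ ≤ (2 * ((n : ℝ) - 1)) ^ m * G * (p : ℝ) * Fp := by
              apply mul_le_mul_of_nonneg_left hFlow
              exact mul_nonneg (mul_nonneg (pow_pos (by linarith : (0:ℝ) < 2 * ((n : ℝ) - 1)) m).le hGpos.le) hP0.le
          _ = ((2 * ((n : ℝ) - 1)) ^ m * G) * (p : ℝ) * Fp := by ring
      have step : E ^ m * pf ≤ ((2 * ((n : ℝ) - 1)) ^ m * G) * (p : ℝ) * Bv := by
        have hmul : (E ^ m * pf) * G ≤ (((2 * ((n : ℝ) - 1)) ^ m * G) * (p : ℝ) * Bv) * G := by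
          calc (E ^ m * pf) * G = E ^ m * pf * G := by ring
            _ ≤ ((2 * ((n : ℝ) - 1)) ^ m * G) * (p : ℝ) * Fp := key
            _ = ((2 * ((n : ℝ) - 1)) ^ m * G) * (p : ℝ) * (G * Bv) := by rw [hGB]
            _ = (((2 * ((n : ℝ) - 1)) ^ m * G) * (p : ℝ) * Bv) * G := by ring
        exact le_of_mul_le_mul_right hmul hGpos
      rw [show E ^ m * (A / Bv) = (E ^ m * A) / Bv from by ring,
        show (2 * ((n : ℝ) - 1)) ^ m * G * ((p : ℝ) * A / pf)
          = ((2 * ((n : ℝ) - 1)) ^ m * G * ((p : ℝ)) * A) / pf from by ring,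
        div_le_div_iff₀ hBpos hpf]
      calc E ^ m * A * pf = A * (E ^ m * pf) := by ring
        _ ≤ A * (((2 * ((n : ℝ) - 1)) ^ m * G) * (p : ℝ) * Bv) :=
            mul_le_mul_of_nonneg_left step hA.le
        _ = (2 * ((n : ℝ) - 1)) ^ m * G * (p : ℝ) * A * Bv := by ring
end
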